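/- arXiv:dg-ga/9705010 — 4 statements merged into one kernel-verified Lean document; each statement's English description precedes it below -/
import Mathlib

section
/- Let ω be a differentiable 2-form on ℝ⁴ that is closed, self-dual at every point, and vanishes identically on the line {x₁=x₂=x₃=0} (i.e. ω(θ,0,0,0)=0 for all θ). For each θ define the 3×3 real matrix L(θ) by L(θ)ᵢⱼ = ∂/∂xⱼ [ω(·)(e₀,eᵢ)] evaluated at (θ,0,0,0), for i,j ∈ {1,2,3}. Then L(θ) is symmetric and has trace zero for every θ. -/
/-! Let `D` be the derivative of `ω` at `(θ,0,0,0)`, so that `L(θ)ᵢⱼ = D_{eⱼ} ω(e₀,eᵢ)`.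
Since `ω` vanishes along the line, `D_{e₀} = 0`, and closedness evaluated on `(e₀,eᵢ,eⱼ)` is then
exactly the symmetry of `L(θ)`. Self-duality rewrites the trace as
`D_{e₁} ω(e₂,e₃) + D_{e₂} ω(e₃,e₁) + D_{e₃} ω(e₁,e₂)`, which is `dω(e₁,e₂,e₃) = 0`; here closedness
evaluated on `(u,u,w)` gives `D_w ω(u,u) = 0`, so each `D_w ω` is alternating. -/

noncomputable section

/-- The standard basis vectors of ℝ⁴ (coordinates (θ,x₁,x₂,x₃)). -/
def e (i : Fin 4) : Fin 4 → ℝ := Pi.single i 1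

/-- The point (θ,0,0,0) on the singular circle/line C. -/
def line (θ : ℝ) : Fin 4 → ℝ := Pi.single 0 θ

section

variable {𝕜 E F G H : Type*} [NontriviallyNormedField 𝕜]
  [NormedAddCommGroup E] [NormedSpace 𝕜 E] [NormedAddCommGroup F] [NormedSpace 𝕜 F]
  [NormedAddCommGroup G] [NormedSpace 𝕜 G] [NormedAddCommGroup H] [NormedSpace 𝕜 H]

theorem fderiv_apply_eq_zero_of_forall_add_smul_eq {f : E → F} {x v : E}
    (hf : DifferentiableAt 𝕜 f x) (h : ∀ t : 𝕜, f (x + t • v) = f x) :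
    fderiv 𝕜 f x v = 0 := by
  rw [← hf.lineDeriv_eq_fderiv, lineDeriv]
  simp_rw [h]
  exact deriv_const _ _

theorem fderiv_apply_apply {ω : E → F →L[𝕜] G →L[𝕜] H} {p : E}
    (hω : DifferentiableAt 𝕜 ω p) (a : F) (b : G) (v : E) :
    fderiv 𝕜 (fun q => ω q a b) p v = fderiv 𝕜 ω p v a b := by
  rw [fderiv_clm_apply (hω.clm_apply (differentiableAt_const a)) (differentiableAt_const b),
    fderiv_clm_apply hω (differentiableAt_const a)]
  simp

theorem fderiv_apply_apply_congr {ω : E → F →L[𝕜] G →L[𝕜] H} {p : E}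
    (hω : DifferentiableAt 𝕜 ω p) {a c : F} {b d : G} (h : ∀ q, ω q a b = ω q c d) (v : E) :
    fderiv 𝕜 ω p v a b = fderiv 𝕜 ω p v c d := by
  rw [← fderiv_apply_apply hω, ← fderiv_apply_apply hω, funext h]

theorem apply_swap_eq_neg_of_closed {D : E → E →L[𝕜] E →L[𝕜] F}
    (hD : ∀ u v w, D u v w - D v u w + D w u v = 0) (w u v : E) :
    D w u v = -D w v u := by
  have hdiag : ∀ x, D w x x = 0 := fun x => by simpa using hD x x w
  have := hdiag (u + v)
  simp only [map_add, add_apply, hdiag, zero_add, add_zero] at this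
  exact eq_neg_of_add_eq_zero_right this

end

theorem line_add_smul_e_zero (θ t : ℝ) : line θ + t • e 0 = line (θ + t) := by
  ext i
  fin_cases i <;> simp [line, e]

theorem L_isSymm_traceless_general
    (ω : (Fin 4 → ℝ) → ((Fin 4 → ℝ) →L[ℝ] (Fin 4 → ℝ) →L[ℝ] ℝ))
    (hdiff : Differentiable ℝ ω)
    (hclosed : ∀ p u v w : Fin 4 → ℝ,
      fderiv ℝ ω p u v w - fderiv ℝ ω p v u w + fderiv ℝ ω p w u v = 0)
    (hsd : ∀ p : Fin 4 → ℝ,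
      ω p (e 0) (e 1) = ω p (e 2) (e 3) ∧
      ω p (e 0) (e 2) = ω p (e 3) (e 1) ∧
      ω p (e 0) (e 3) = ω p (e 1) (e 2))
    (hzero : ∀ θ : ℝ, ω (line θ) = 0)
    (L : ℝ → Matrix (Fin 3) (Fin 3) ℝ)
    (hL : ∀ (θ : ℝ) (i j : Fin 3),
      L θ i j = fderiv ℝ (fun q => ω q (e 0) (e i.succ)) (line θ) (e j.succ)) :
    ∀ θ : ℝ, (L θ).IsSymm ∧ Matrix.trace (L θ) = 0 := by
  intro θ
  set D := fderiv ℝ ω (line θ)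
  have hD0 : D (e 0) = 0 :=
    fderiv_apply_eq_zero_of_forall_add_smul_eq (f := ω) (hdiff (line θ)) fun t => by
      rw [line_add_smul_e_zero, hzero, hzero]
  have hLD : ∀ i j, L θ i j = D (e j.succ) (e 0) (e i.succ) := fun i j => by
    rw [hL, fderiv_apply_apply (hdiff _)]
  constructor
  · ext i j
    have hc : D (e 0) (e i.succ) (e j.succ) - D (e i.succ) (e 0) (e j.succ)
        + D (e j.succ) (e 0) (e i.succ) = 0 :=
      hclosed (line θ) (e 0) (e i.succ) (e j.succ)
    rw [hD0, zero_apply, zero_apply, zero_sub, neg_add_eq_zero] at hc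
    rw [Matrix.transpose_apply, hLD, hLD, hc]
  · have h1 : D (e 1) (e 0) (e 1) = D (e 1) (e 2) (e 3) :=
      fderiv_apply_apply_congr (hdiff (line θ)) (fun q => (hsd q).1) (e 1)
    have h2 : D (e 2) (e 0) (e 2) = D (e 2) (e 3) (e 1) :=
      fderiv_apply_apply_congr (hdiff (line θ)) (fun q => (hsd q).2.1) (e 2)
    have h3 : D (e 3) (e 0) (e 3) = D (e 3) (e 1) (e 2) :=
      fderiv_apply_apply_congr (hdiff (line θ)) (fun q => (hsd q).2.2) (e 3)
    have hswap : D (e 2) (e 3) (e 1) = -D (e 2) (e 1) (e 3) :=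
      apply_swap_eq_neg_of_closed (hclosed (line θ)) (e 2) (e 3) (e 1)
    have hc : D (e 1) (e 2) (e 3) - D (e 2) (e 1) (e 3) + D (e 3) (e 1) (e 2) = 0 :=
      hclosed (line θ) (e 1) (e 2) (e 3)
    rw [Matrix.trace_fin_three, hLD, hLD, hLD]
    change D (e 1) (e 0) (e 1) + D (e 2) (e 0) (e 2) + D (e 3) (e 0) (e 3) = 0
    linarith

/-- If ω is a differentiable 2-form on ℝ⁴ which is closed, self-dual at every point,
and vanishes on the line {x₁=x₂=x₃=0}, then the matrix of first partial derivatives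
L(θ)ᵢⱼ = ∂/∂xⱼ [ω(·)(e₀,eᵢ)] at (θ,0,0,0) is symmetric and traceless. -/
theorem L_isSymm_traceless
    (ω : (Fin 4 → ℝ) → ((Fin 4 → ℝ) →L[ℝ] (Fin 4 → ℝ) →L[ℝ] ℝ))
    (hdiff : Differentiable ℝ ω)
    (halt : ∀ p u v, ω p u v = -ω p v u)
    (hclosed : ∀ p u v w : Fin 4 → ℝ,
      fderiv ℝ ω p u v w - fderiv ℝ ω p v u w + fderiv ℝ ω p w u v = 0)
    (hsd : ∀ p : Fin 4 → ℝ,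
      ω p (e 0) (e 1) = ω p (e 2) (e 3) ∧
      ω p (e 0) (e 2) = ω p (e 3) (e 1) ∧
      ω p (e 0) (e 3) = ω p (e 1) (e 2))
    (hzero : ∀ θ : ℝ, ω (line θ) = 0)
    (L : ℝ → Matrix (Fin 3) (Fin 3) ℝ)
    (hL : ∀ (θ : ℝ) (i j : Fin 3),
      L θ i j = fderiv ℝ (fun q => ω q (e 0) (e i.succ)) (line θ) (e j.succ)) :
    ∀ θ : ℝ, (L θ).IsSymm ∧ Matrix.trace (L θ) = 0 :=
  L_isSymm_traceless_general ω hdiff hclosed hsd hzero L hL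
end
end

section
/- Fix R with 0 < R < 1 and let L(θ) be the 3×3 matrix [[cos θ − R, sin θ, 0],[sin θ, −cos θ, 0],[0, 0, R]]. Then there is no continuous map v : ℝ → ℝ³ such that for all θ: v is 2π-periodic (v(θ+2π) = v(θ)), ‖v(θ)‖ = 1, and v(θ) is an eigenvector of L(θ) for a negative eigenvalue (i.e. there exists μ(θ) < 0 with L(θ)·v(θ) = μ(θ)·v(θ)). (In other words, the splitting of ℝ³ × S¹ determined by the negative eigenspaces of L(θ) is the unoriented one.) -/
/-!
The third coordinate of a negative eigenvector of `Lmat R θ` vanishes, so `v` is really a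
unit vector `(x, y)` in the plane, a negative eigenvector of
`A(θ) = [[cos θ - R, sin θ], [sin θ, -cos θ]]`.
Since `det A(θ) = R cos θ - 1 < 0`, the negative eigenvalue `μ` is below `-R`, hence below the
mean `-R/2` of the diagonal entries, and the eigen-equations then force `sin θ · x · y ≤ 0`.
Moreover `x` vanishes only where `cos θ = 1`. On `(0, 2π)` the coordinate `x` therefore has a
constant sign, say positive, so `y ≤ 0` on `(0, π)` and `y ≥ 0` on `(π, 2π)`; by continuity and
periodicity `y 0 = 0`. But also `x 0 = 0`, contradicting `‖v 0‖ = 1`.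
-/

noncomputable section

/-- The matrix L(θ) = [[cos θ − R, sin θ, 0], [sin θ, −cos θ, 0], [0, 0, R]]. -/
def Lmat (R θ : ℝ) : Matrix (Fin 3) (Fin 3) ℝ :=
  !![Real.cos θ - R, Real.sin θ, 0;
     Real.sin θ, -Real.cos θ, 0;
     0, 0, R]

open Real Set

theorem Lmat_mulVec_eq_iff {R θ μ : ℝ} {w : Fin 3 → ℝ} :
    (Lmat R θ).mulVec w = (fun i => μ * w i) ↔
      (cos θ - R) * w 0 + sin θ * w 1 = μ * w 0 ∧
      sin θ * w 0 - cos θ * w 1 = μ * w 1 ∧ R * w 2 = μ * w 2 := by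
  simp [funext_iff, Fin.forall_fin_succ, Lmat, dotProduct, Fin.sum_univ_three, sub_eq_add_neg]

theorem Lmat_planar_of_negative_eigenvector {R θ μ : ℝ} {w : EuclideanSpace ℝ (Fin 3)}
    (hR : 0 < R) (hw : ‖w‖ = 1) (hμ : μ < 0)
    (h : (Lmat R θ).mulVec (fun i => w i) = fun i => μ * w i) :
    (cos θ - R) * w 0 + sin θ * w 1 = μ * w 0 ∧ sin θ * w 0 - cos θ * w 1 = μ * w 1 ∧
      w 0 ^ 2 + w 1 ^ 2 = 1 := by
  obtain ⟨h₁, h₂, h₃⟩ := Lmat_mulVec_eq_iff.1 h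
  have hw₂ : w 2 = 0 :=
    (mul_eq_zero.1 (by linarith : (R - μ) * w 2 = 0)).resolve_left (by linarith)
  refine ⟨h₁, h₂, ?_⟩
  simpa [Fin.sum_univ_three, hw, hw₂] using (EuclideanSpace.real_norm_sq_eq w).symm

section PlanarEigenvector

variable {R c s μ x y : ℝ}

theorem charpoly_of_planar_eigen (h₁ : (c - R) * x + s * y = μ * x)
    (h₂ : s * x - c * y = μ * y) (hcs : s ^ 2 + c ^ 2 = 1) (hxy : x ≠ 0 ∨ y ≠ 0) :
    μ ^ 2 + R * μ = 1 - R * c := by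
  have hdet : (c - R - μ) * (c + μ) + s ^ 2 = 0 := by
    rcases hxy with hx | hy
    · refine (mul_eq_zero.1 ?_).resolve_right hx
      linear_combination (c + μ) * h₁ + s * h₂
    · refine (mul_eq_zero.1 ?_).resolve_right hy
      linear_combination s * h₁ - (c - R - μ) * h₂
  linear_combination -hdet + hcs

theorem lt_neg_of_charpoly (hR₀ : 0 ≤ R) (hR₁ : R < 1) (hc : c ≤ 1) (hμ : μ < 0)
    (h : μ ^ 2 + R * μ = 1 - R * c) : μ < -R := by
  nlinarith [mul_le_mul_of_nonneg_left hc hR₀]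

/- `s x y` equals both `-(c - R - μ) x²` and `(c + μ) y²`, and `2μ + R < 0` means
`c + μ < c - R - μ`, so one of the two coefficients has the right sign. -/
theorem mul_mul_nonpos_of_planar_eigen (h₁ : (c - R) * x + s * y = μ * x)
    (h₂ : s * x - c * y = μ * y) (hμ : 2 * μ + R < 0) : s * x * y ≤ 0 := by
  rcases le_or_gt 0 (c - R - μ) with ha | ha
  · have : s * x * y = -((c - R - μ) * x ^ 2) := by linear_combination x * h₁
    nlinarith [mul_nonneg ha (sq_nonneg x)]
  · have : s * x * y = (c + μ) * y ^ 2 := by linear_combination y * h₂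
    nlinarith [mul_nonpos_of_nonpos_of_nonneg (by linarith : c + μ ≤ 0) (sq_nonneg y)]

theorem eq_zero_and_pos_of_planar_eigen_of_fst_eq_zero (h₁ : (c - R) * x + s * y = μ * x)
    (h₂ : s * x - c * y = μ * y) (hμ : μ < 0) (hx : x = 0) (hy : y ≠ 0) : s = 0 ∧ 0 < c := by
  subst hx
  refine ⟨(mul_eq_zero.1 (by linarith : s * y = 0)).resolve_right hy, ?_⟩
  linarith [(mul_eq_zero.1 (by linarith : (c + μ) * y = 0)).resolve_right hy]

end PlanarEigenvector

theorem notMem_Ioo_of_sin_eq_zero_of_cos_pos {θ : ℝ} (hs : sin θ = 0) (hc : 0 < cos θ) :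
    θ ∉ Ioo 0 (2 * π) := by
  rintro ⟨h₀, h₁⟩
  have : cos θ = 1 := by nlinarith [sin_sq_add_cos_sq θ]
  rw [cos_eq_one_iff_of_lt_of_lt (by linarith) h₁] at this
  exact h₀.ne' this

theorem IsPreconnected.lt_of_forall_ne {X α : Type*} [TopologicalSpace X] [LinearOrder α]
    [TopologicalSpace α] [OrderClosedTopology α] {S : Set X} (hS : IsPreconnected S)
    {f : X → α} (hf : ContinuousOn f S) {c : α} (hne : ∀ t ∈ S, f t ≠ c) {a b : X} (ha : a ∈ S)
    (hb : b ∈ S) (hfa : c < f a) : c < f b := by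
  by_contra! hfb
  obtain ⟨t, ht, hft⟩ := hS.intermediate_value hb ha hf ⟨hfb, hfa.le⟩
  exact hne t ht hft

theorem eq_zero_of_sin_mul_mul_nonpos {x y : ℝ → ℝ} (hx : Continuous x) (hy : Continuous y)
    (hxne : ∀ θ ∈ Ioo 0 (2 * π), x θ ≠ 0) (hsign : ∀ θ, sin θ * x θ * y θ ≤ 0)
    (hper : y (2 * π) = y 0) : y 0 = 0 := by
  have hπ : π ∈ Ioo 0 (2 * π) := ⟨pi_pos, by linarith [pi_pos]⟩
  wlog hxπ : 0 < x π generalizing x y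
  · refine neg_eq_zero.1 (this hx.neg hy.neg (fun θ hθ => neg_ne_zero.2 (hxne θ hθ))
      (fun θ => by simpa using hsign θ) (by simp [hper]) ?_)
    exact neg_pos.2 ((not_lt.1 hxπ).lt_of_ne (hxne π hπ))
  have hxpos : ∀ θ ∈ Ioo 0 (2 * π), 0 < x θ := fun θ hθ =>
    isPreconnected_Ioo.lt_of_forall_ne hx.continuousOn hxne hπ hθ hxπ
  have hle : y 0 ≤ 0 := by
    have h₀ : (0 : ℝ) ∈ closure (Ioo 0 π) := by
      rw [closure_Ioo pi_pos.ne]; exact left_mem_Icc.2 pi_pos.le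
    refine le_on_closure (fun θ hθ => ?_) hy.continuousOn continuousOn_const h₀
    have hxθ := hxpos θ ⟨hθ.1, by linarith [hθ.2, pi_pos]⟩
    exact nonpos_of_mul_nonpos_right (hsign θ) (mul_pos (sin_pos_of_pos_of_lt_pi hθ.1 hθ.2) hxθ)
  have hge : 0 ≤ y (2 * π) := by
    have h₂π : 2 * π ∈ closure (Ioo π (2 * π)) := by
      rw [closure_Ioo (by linarith [pi_pos])]; exact right_mem_Icc.2 (by linarith [pi_pos])
    refine le_on_closure (fun θ hθ => ?_) continuousOn_const hy.continuousOn h₂π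
    have hs : sin θ < 0 := by
      rw [← sin_sub_two_pi]
      exact sin_neg_of_neg_of_neg_pi_lt (by linarith [hθ.2]) (by linarith [hθ.1])
    have hxθ := hxpos θ ⟨by linarith [hθ.1, pi_pos], hθ.2⟩
    exact nonneg_of_mul_nonpos_right (hsign θ) (mul_neg_of_neg_of_pos hs hxθ)
  linarith

/-- For 0 < R < 1, there is no continuous, 2π-periodic, unit-norm choice of
eigenvector of L(θ) for a negative eigenvalue: the negative-eigenspace splitting of
ℝ³ × S¹ is the unoriented one. -/
theorem no_continuous_periodic_negative_eigenvector (R : ℝ) (hR0 : 0 < R) (hR1 : R < 1) :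
    ¬ ∃ v : ℝ → EuclideanSpace ℝ (Fin 3),
        Continuous v ∧
        (∀ θ : ℝ, v (θ + 2 * Real.pi) = v θ) ∧
        (∀ θ : ℝ, ‖v θ‖ = 1) ∧
        (∀ θ : ℝ, ∃ μ : ℝ, μ < 0 ∧
          (Lmat R θ).mulVec (fun i => v θ i) = fun i => μ * v θ i) := by
  rintro ⟨v, hv, hper, hnorm, heig⟩
  set x : ℝ → ℝ := fun θ => v θ 0
  set y : ℝ → ℝ := fun θ => v θ 1
  have hplanar θ : ∃ μ < 0, (cos θ - R) * x θ + sin θ * y θ = μ * x θ ∧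
      sin θ * x θ - cos θ * y θ = μ * y θ ∧ x θ ^ 2 + y θ ^ 2 = 1 := by
    obtain ⟨μ, hμ, h⟩ := heig θ
    exact ⟨μ, hμ, Lmat_planar_of_negative_eigenvector hR0 (hnorm θ) hμ h⟩
  have hsign θ : sin θ * x θ * y θ ≤ 0 := by
    obtain ⟨μ, hμ, h₁, h₂, hxy⟩ := hplanar θ
    have hne : x θ ≠ 0 ∨ y θ ≠ 0 := by by_contra! h; simp [h] at hxy
    have hchar := charpoly_of_planar_eigen h₁ h₂ (sin_sq_add_cos_sq θ) hne
    have := lt_neg_of_charpoly hR0.le hR1 (cos_le_one θ) hμ hchar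
    exact mul_mul_nonpos_of_planar_eigen h₁ h₂ (by linarith)
  have hxne : ∀ θ ∈ Ioo 0 (2 * π), x θ ≠ 0 := by
    intro θ hθ hx
    obtain ⟨μ, hμ, h₁, h₂, hxy⟩ := hplanar θ
    have hy : y θ ≠ 0 := by rintro hy; simp [hx, hy] at hxy
    obtain ⟨hs, hc⟩ := eq_zero_and_pos_of_planar_eigen_of_fst_eq_zero h₁ h₂ hμ hx hy
    exact notMem_Ioo_of_sin_eq_zero_of_cos_pos hs hc hθ
  obtain ⟨μ, hμ, h₁, -, hxy⟩ := hplanar 0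
  have hx₀ : x 0 = 0 := by
    simp only [cos_zero, sin_zero, zero_mul, add_zero] at h₁
    exact (mul_eq_zero.1 (by linarith : (1 - R - μ) * x 0 = 0)).resolve_left (by linarith)
  have hy₀ : y 0 = 0 := eq_zero_of_sin_mul_mul_nonpos (by fun_prop) (by fun_prop) hxne hsign
    (by simp only [y, ← hper 0, zero_add])
  simp [hx₀, hy₀] at hxy
end
end

section
/- Let ω be a nonzero alternating bilinear form on euclidean ℝ⁴ satisfying the self-duality relations ω(e₀,e₁)=ω(e₂,e₃), ω(e₀,e₂)=ω(e₃,e₁), ω(e₀,e₃)=ω(e₁,e₂), and set λ = √(ω(e₀,e₁)² + ω(e₀,e₂)² + ω(e₀,e₃)²) > 0. Then there exists a unique linear map J : ℝ⁴ → ℝ⁴ such that ω(Jx, y) = λ·⟨x,y⟩ for all x, y ∈ ℝ⁴; moreover this J satisfies J∘J = −id (J is an almost complex structure) and ⟨Jx, Jy⟩ = ⟨x, y⟩ for all x, y (J is orthogonal). In other words, there is a unique almost complex structure on ℝ⁴ compatible with ω and the conformally rescaled metric λ·⟨·,·⟩. -/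
/-!
Self-duality says exactly that `ω x y = ⟪A x, y⟫` where `A` is left multiplication by the
imaginary quaternion `q = a i + b j + c k` on `ℍ ≅ ℝ⁴`, with `a, b, c = ω(e₀,e₁), ω(e₀,e₂), ω(e₀,e₃)`.
Hence `A² = q² = -λ²`. A compatible `J` satisfies `A J = λ`, which forces `J = -λ⁻¹ A`; so
`J² = -1`, and `J` is orthogonal because `A` is skew-adjoint (`ω` being alternating).
-/

open scoped RealInnerProductSpace

noncomputable section

/-- The standard orthonormal basis e₀,e₁,e₂,e₃ of euclidean ℝ⁴. -/
def E (i : Fin 4) : EuclideanSpace ℝ (Fin 4) := EuclideanSpace.single i 1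

section Compatible

variable {V : Type*} [NormedAddCommGroup V] [InnerProductSpace ℝ V]
  {ω : V →ₗ[ℝ] V →ₗ[ℝ] ℝ} {A : V →ₗ[ℝ] V} {lam : ℝ}

theorem eq_neg_inv_smul_of_compatible (hA : ∀ x y, ω x y = ⟪A x, y⟫)
    (hA2 : ∀ x, A (A x) = -(lam ^ 2) • x) (hlam : lam ≠ 0) {J : V →ₗ[ℝ] V}
    (hJ : ∀ x y, ω (J x) y = lam * ⟪x, y⟫) : J = -lam⁻¹ • A := by
  ext x
  have hAJ : A (J x) = lam • x :=
    ext_inner_right ℝ fun y => by rw [← hA, hJ, real_inner_smul_left]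
  have h : -(lam ^ 2) • J x = -(lam ^ 2) • (-lam⁻¹ • A) x := by
    rw [← hA2, hAJ, map_smul, LinearMap.smul_apply, smul_smul]
    congr 1
    field_simp
  exact smul_right_injective V (neg_ne_zero.mpr (pow_ne_zero 2 hlam)) h

theorem neg_inv_smul_compatible (hA : ∀ x y, ω x y = ⟪A x, y⟫)
    (hA2 : ∀ x, A (A x) = -(lam ^ 2) • x) (hlam : lam ≠ 0) (x y : V) :
    ω ((-lam⁻¹ • A) x) y = lam * ⟪x, y⟫ := by
  rw [hA, LinearMap.smul_apply, map_smul, hA2, smul_smul, real_inner_smul_left]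
  congr 1
  field_simp

theorem neg_inv_smul_apply_apply (hA2 : ∀ x, A (A x) = -(lam ^ 2) • x) (hlam : lam ≠ 0)
    (x : V) : (-lam⁻¹ • A) ((-lam⁻¹ • A) x) = -x := by
  rw [LinearMap.smul_apply, LinearMap.smul_apply, map_smul, hA2, smul_smul, smul_smul,
    ← neg_one_smul ℝ x]
  congr 1
  field_simp

theorem inner_map_map_of_isAlt (hω : ω.IsAlt) (hA : ∀ x y, ω x y = ⟪A x, y⟫)
    (hA2 : ∀ x, A (A x) = -(lam ^ 2) • x) (x y : V) :
    ⟪A x, A y⟫ = lam ^ 2 * ⟪x, y⟫ := by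
  rw [← hA, ← hω.neg, hA, hA2, real_inner_smul_left, real_inner_comm]
  ring

theorem inner_neg_inv_smul_apply (hω : ω.IsAlt) (hA : ∀ x y, ω x y = ⟪A x, y⟫)
    (hA2 : ∀ x, A (A x) = -(lam ^ 2) • x) (hlam : lam ≠ 0) (x y : V) :
    ⟪(-lam⁻¹ • A) x, (-lam⁻¹ • A) y⟫ = ⟪x, y⟫ := by
  rw [LinearMap.smul_apply, LinearMap.smul_apply, real_inner_smul_left, real_inner_smul_right,
    inner_map_map_of_isAlt hω hA hA2]
  field_simp

end Compatible

section SelfDual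

def IsSelfDual (ω : EuclideanSpace ℝ (Fin 4) →ₗ[ℝ] EuclideanSpace ℝ (Fin 4) →ₗ[ℝ] ℝ) : Prop :=
  ω (E 0) (E 1) = ω (E 2) (E 3) ∧ ω (E 0) (E 2) = ω (E 3) (E 1) ∧ ω (E 0) (E 3) = ω (E 1) (E 2)

/-- Left multiplication by the quaternion `a i + b j + c k`, in the basis `1, i, j, k`. -/
def selfDualMatrix (a b c : ℝ) : Matrix (Fin 4) (Fin 4) ℝ :=
  !![0, -a, -b, -c; a, 0, -c, b; b, c, 0, -a; c, -b, a, 0]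

@[simp]
theorem selfDualMatrix_zero : selfDualMatrix 0 0 0 = 0 := by
  ext i j
  fin_cases i <;> fin_cases j <;> simp [selfDualMatrix]

theorem selfDualMatrix_mul_self (a b c : ℝ) :
    selfDualMatrix a b c * selfDualMatrix a b c = -(a ^ 2 + b ^ 2 + c ^ 2) • 1 := by
  ext i j
  fin_cases i <;> fin_cases j <;>
    simp only [selfDualMatrix, Matrix.mul_apply, Fin.sum_univ_four, Matrix.of_apply,
      Matrix.cons_val', Matrix.cons_val, Matrix.cons_val_zero, Matrix.cons_val_one,
      Matrix.cons_val_fin_one, Fin.isValue, Fin.mk_one, Fin.zero_eta, Fin.reduceFinMk,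
      Matrix.smul_apply, Matrix.one_apply, smul_eq_mul, Fin.reduceEq, if_true, if_false] <;>
    ring

theorem toEuclideanLin_selfDualMatrix_apply_apply (a b c : ℝ) (x : EuclideanSpace ℝ (Fin 4)) :
    Matrix.toEuclideanLin (selfDualMatrix a b c) (Matrix.toEuclideanLin (selfDualMatrix a b c) x)
      = -(a ^ 2 + b ^ 2 + c ^ 2) • x := by
  rw [← LinearMap.comp_apply, ← Matrix.toLpLin_mul_same, selfDualMatrix_mul_self]
  simp

theorem inner_toEuclideanLin_E (M : Matrix (Fin 4) (Fin 4) ℝ) (i j : Fin 4) :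
    ⟪Matrix.toEuclideanLin M (E i), E j⟫ = M j i := by
  simp [E, EuclideanSpace.inner_single_right, Matrix.toLpLin_apply]

variable {ω : EuclideanSpace ℝ (Fin 4) →ₗ[ℝ] EuclideanSpace ℝ (Fin 4) →ₗ[ℝ] ℝ}

theorem IsSelfDual.apply_eq_inner (hω : ω.IsAlt) (hsd : IsSelfDual ω)
    (x y : EuclideanSpace ℝ (Fin 4)) :
    ω x y = ⟪Matrix.toEuclideanLin
      (selfDualMatrix (ω (E 0) (E 1)) (ω (E 0) (E 2)) (ω (E 0) (E 3))) x, y⟫ := by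
  obtain ⟨h23, h31, h12⟩ := hsd
  set a := ω (E 0) (E 1)
  set b := ω (E 0) (E 2)
  set c := ω (E 0) (E 3)
  suffices ω = (innerₗ _).comp (Matrix.toEuclideanLin (selfDualMatrix a b c)) from
    LinearMap.congr_fun₂ this x y
  refine LinearMap.ext_basis (EuclideanSpace.basisFun (Fin 4) ℝ).toBasis
    (EuclideanSpace.basisFun (Fin 4) ℝ).toBasis fun i j => ?_
  simp only [OrthonormalBasis.coe_toBasis, EuclideanSpace.basisFun_apply, LinearMap.comp_apply]
  change ω (E i) (E j) = ⟪Matrix.toEuclideanLin (selfDualMatrix a b c) (E i), E j⟫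
  have hii := hω (E i)
  have hji := hω.neg (E i) (E j)
  rw [inner_toEuclideanLin_E]
  fin_cases i <;> fin_cases j <;>
    simp only [selfDualMatrix, Matrix.of_apply, Matrix.cons_val', Matrix.cons_val,
      Matrix.cons_val_zero, Matrix.cons_val_one, Matrix.cons_val_fin_one, Fin.isValue, Fin.mk_one,
      Fin.zero_eta, Fin.reduceFinMk] at hii hji ⊢ <;>
    linarith

theorem IsSelfDual.sum_sq_pos (hω : ω.IsAlt) (hsd : IsSelfDual ω) (hne : ω ≠ 0) :
    0 < ω (E 0) (E 1) ^ 2 + ω (E 0) (E 2) ^ 2 + ω (E 0) (E 3) ^ 2 := by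
  by_contra! h
  have ha : ω (E 0) (E 1) = 0 := by nlinarith
  have hb : ω (E 0) (E 2) = 0 := by nlinarith
  have hc : ω (E 0) (E 3) = 0 := by nlinarith
  refine hne (LinearMap.ext₂ fun x y => ?_)
  rw [hsd.apply_eq_inner hω, ha, hb, hc]
  simp

end SelfDual

/-- For a nonzero self-dual alternating bilinear form ω on euclidean ℝ⁴, with
λ = √(ω(e₀,e₁)² + ω(e₀,e₂)² + ω(e₀,e₃)²), we have λ > 0, there is a unique linear map
J with ω(Jx,y) = λ⟨x,y⟩, and any such J satisfies J² = −id and is orthogonal: J is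
the unique almost complex structure compatible with ω and the metric λ⟨·,·⟩. -/
theorem unique_compatible_acs
    (ω : EuclideanSpace ℝ (Fin 4) →ₗ[ℝ] EuclideanSpace ℝ (Fin 4) →ₗ[ℝ] ℝ)
    (halt : ∀ x, ω x x = 0)
    (hne : ω ≠ 0)
    (hsd : ω (E 0) (E 1) = ω (E 2) (E 3) ∧
           ω (E 0) (E 2) = ω (E 3) (E 1) ∧
           ω (E 0) (E 3) = ω (E 1) (E 2))
    (lam : ℝ)
    (hlam : lam = Real.sqrt
      (ω (E 0) (E 1) ^ 2 + ω (E 0) (E 2) ^ 2 + ω (E 0) (E 3) ^ 2)) :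
    0 < lam ∧
    (∃! J : EuclideanSpace ℝ (Fin 4) →ₗ[ℝ] EuclideanSpace ℝ (Fin 4),
      ∀ x y, ω (J x) y = lam * (inner ℝ x y : ℝ)) ∧
    (∀ J : EuclideanSpace ℝ (Fin 4) →ₗ[ℝ] EuclideanSpace ℝ (Fin 4),
      (∀ x y, ω (J x) y = lam * (inner ℝ x y : ℝ)) →
      (∀ x, J (J x) = -x) ∧ (∀ x y, (inner ℝ (J x) (J y) : ℝ) = inner ℝ x y)) := by
  have hsd : IsSelfDual ω := hsd
  have hpos := hsd.sum_sq_pos halt hne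
  have hlam_pos : 0 < lam := hlam ▸ Real.sqrt_pos.mpr hpos
  have hlam_ne : lam ≠ 0 := hlam_pos.ne'
  set A := Matrix.toEuclideanLin
    (selfDualMatrix (ω (E 0) (E 1)) (ω (E 0) (E 2)) (ω (E 0) (E 3)))
  have hA : ∀ x y, ω x y = ⟪A x, y⟫ := hsd.apply_eq_inner halt
  have hA2 : ∀ x, A (A x) = -(lam ^ 2) • x := by
    rw [hlam, Real.sq_sqrt hpos.le]
    exact toEuclideanLin_selfDualMatrix_apply_apply _ _ _
  refine ⟨hlam_pos, ⟨-lam⁻¹ • A, neg_inv_smul_compatible hA hA2 hlam_ne,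
    fun J hJ => eq_neg_inv_smul_of_compatible hA hA2 hlam_ne hJ⟩, fun J hJ => ?_⟩
  obtain rfl := eq_neg_inv_smul_of_compatible hA hA2 hlam_ne hJ
  exact ⟨neg_inv_smul_apply_apply hA2 hlam_ne, inner_neg_inv_smul_apply halt hA hA2 hlam_ne⟩
end
end

section
/- Let η : ℝ⁴ → (ℝ⁴)* be a C² covector field on ℝ⁴ with components η₀, η₁, η₂, η₃ (so η(p)(v) = Σⱼ ηⱼ(p)vⱼ), and suppose that dη vanishes at every point of the line C = {x₁=x₂=x₃=0}, i.e. ∂ηⱼ/∂x_k(θ,0) = ∂η_k/∂xⱼ(θ,0) for all j,k ∈ {0,1,2,3} and all θ (where x₀ = θ). Suppose also f₀ : ℝ → ℝ is differentiable with f₀'(θ) = η₀(θ,0) for all θ. Define f(θ,x₁,x₂,x₃) = f₀(θ) + Σᵢ ηᵢ(θ,0)·xᵢ + ½ Σᵢⱼ (∂ηᵢ/∂xⱼ)(θ,0)·xᵢxⱼ, with i,j ranging over {1,2,3}. Then the 1-form η − df agrees with 0 to first order along C: for every θ, (η − df)(θ,0) = 0, and all first-order partial derivatives ∂/∂x_k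 (k ∈ {1,2,3}) of every component of η − df vanish at (θ,0). -/
/-!
Write π q = ℓ q • u for the projection onto the line C = ℝu (here ℓ = x₀, u = e₀) and
σ q = q - π q for the transverse part. Then f(q) = f₀(ℓ q) + η(π q)(σ q) + ½ Dη(π q)(σ q)(σ q) is
the second-order Taylor expansion, in the transverse variable, of a primitive of η, and
  ∂ᵥf(q) = η(π q)v + Dη(π q)(π v)(σ q) + ½(Dη(π q)(σ v)(σ q) + Dη(π q)(σ q)(σ v)) + O(|σ q|²).
On C we have σ = 0, so df = η there. Differentiating once more at a point x of C, the
O(|σ q|²) term (its coefficient involves D²η, which is merely continuous) contributes nothing, and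
  ∂_w∂ᵥf(x) = Dη(x)(π w)(v) + Dη(x)(π v)(σ w) + ½(Dη(x)(σ v)(σ w) + Dη(x)(σ w)(σ v)),
which the symmetry of Dη(x) (dη = 0 on C) turns into Dη(x)(w)(v) = ∂_w(η(·)v)(x).
-/

noncomputable section

open Filter Asymptotics Topology

section
variable {E F G : Type*} [NormedAddCommGroup E] [NormedSpace ℝ E] [NormedAddCommGroup F]
  [NormedSpace ℝ F] [NormedAddCommGroup G] [NormedSpace ℝ G]
  {c : E → F →L[ℝ] G} {g : E → F} {g' : E →L[ℝ] F} {x : E}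

theorem HasFDerivAt.clm_apply_of_eq_zero {c' : E →L[ℝ] F →L[ℝ] G} (hc : HasFDerivAt c c' x)
    (hg : HasFDerivAt g g' x) (hgx : g x = 0) :
    HasFDerivAt (fun y => c y (g y)) ((c x).comp g') x := by
  simpa [hgx] using hc.clm_apply hg

theorem HasFDerivAt.clm_apply_of_tendsto_zero (hc : Tendsto c (𝓝 x) (𝓝 0))
    (hg : HasFDerivAt g g' x) (hgx : g x = 0) :
    HasFDerivAt (fun y => c y (g y)) (0 : E →L[ℝ] G) x := by
  refine .of_isLittleO ?_
  have hg : g =O[𝓝 x] (· - x) := by simpa [hgx] using hg.isBigO_sub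
  have hprod : (fun y => ‖c y‖ * ‖g y‖) =o[𝓝 x] (fun y => (1 : ℝ) * ‖y - x‖) :=
    ((isLittleO_one_iff ℝ).2 (tendsto_zero_iff_norm_tendsto_zero.1 hc)).mul_isBigO hg.norm_norm
  simpa [hgx] using (IsBigO.of_norm_le fun y => (c y).le_opNorm (g y)).trans_isLittleO
    (hprod.norm_right.trans_isBigO (by simp [isBigO_refl]))

theorem ContDiff.hasFDerivAt_fderiv {f : E → F} (hf : ContDiff ℝ 2 f) (x : E) :
    HasFDerivAt (fderiv ℝ f) (fderiv ℝ (fderiv ℝ f) x) x :=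
  ((hf.fderiv_right (m := 1) le_rfl).differentiable one_ne_zero x).hasFDerivAt

theorem fderiv_clm_apply_const_apply (hc : DifferentiableAt ℝ c x) (v : F) (w : E) :
    fderiv ℝ (fun y => c y v) x w = fderiv ℝ c x w v := by
  simp [fderiv_clm_apply hc (differentiableAt_const v)]

end

section
variable {E : Type*} [NormedAddCommGroup E] [NormedSpace ℝ E] (ℓ : E →L[ℝ] ℝ) (u : E)

def lineProj : E →L[ℝ] E := ℓ.smulRight u

def transverseProj : E →L[ℝ] E := ContinuousLinearMap.id ℝ E - lineProj ℓ u

local notation "π" => lineProj ℓ u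
local notation "σ" => transverseProj ℓ u

theorem lineProj_apply (q : E) : π q = ℓ q • u := rfl

theorem transverseProj_apply (q : E) : σ q = q - ℓ q • u := rfl

theorem lineProj_add_transverseProj (q : E) : π q + σ q = q :=
  add_sub_cancel _ _

def taylorPrimitive (η : E → E →L[ℝ] ℝ) (f₀ : ℝ → ℝ) (q : E) : ℝ :=
  f₀ (ℓ q) + η (π q) (σ q) + 1 / 2 * fderiv ℝ η (π q) (σ q) (σ q)

variable {ℓ u} {η : E → E →L[ℝ] ℝ} {f₀ : ℝ → ℝ}

theorem lineProj_smul_self (hu : ℓ u = 1) (t : ℝ) : π (t • u) = t • u := by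
  simp [lineProj_apply, hu]

theorem transverseProj_smul_self (hu : ℓ u = 1) (t : ℝ) : σ (t • u) = 0 := by
  simp [transverseProj_apply, hu]

theorem fderiv_taylorPrimitive_apply (hη : ContDiff ℝ 2 η)
    (hf₀ : ∀ t, HasDerivAt f₀ (η (t • u) u) t) (q v : E) :
    fderiv ℝ (taylorPrimitive ℓ u η f₀) q v =
      η (π q) v + fderiv ℝ η (π q) (π v) (σ q)
        + 1 / 2 * (fderiv ℝ η (π q) (σ v) (σ q) + fderiv ℝ η (π q) (σ q) (σ v))
        + 1 / 2 * fderiv ℝ (fderiv ℝ η) (π q) (π v) (σ q) (σ q) := by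
  have hηπ := (hη.differentiable two_ne_zero (π q)).hasFDerivAt.comp q (π).hasFDerivAt
  have hDηπ := HasFDerivAt.comp (g := fderiv ℝ η) q (hη.hasFDerivAt_fderiv (π q))
    (π).hasFDerivAt
  have h : HasFDerivAt (taylorPrimitive ℓ u η f₀) _ q :=
    (((hf₀ (ℓ q)).comp_hasFDerivAt q ℓ.hasFDerivAt).add
      (hηπ.clm_apply (σ).hasFDerivAt)).add
      (((hDηπ.clm_apply (σ).hasFDerivAt).clm_apply (σ).hasFDerivAt).const_mul (1 / 2))
  rw [h.fderiv]
  simp only [Function.comp_apply, lineProj_apply, transverseProj_apply, map_sub, map_smul,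
    ContinuousLinearMap.sub_comp, ContinuousLinearMap.smul_comp, ContinuousLinearMap.flip_add,
    add_apply, smul_add, smul_apply, smul_eq_mul, ContinuousLinearMap.comp_apply, sub_apply,
    ContinuousLinearMap.flip_apply]
  ring

theorem fderiv_taylorPrimitive_smul (hη : ContDiff ℝ 2 η)
    (hf₀ : ∀ t, HasDerivAt f₀ (η (t • u) u) t) (hu : ℓ u = 1) (t : ℝ) :
    fderiv ℝ (taylorPrimitive ℓ u η f₀) (t • u) = η (t • u) := by
  ext v
  simp [fderiv_taylorPrimitive_apply hη hf₀, lineProj_smul_self hu, transverseProj_smul_self hu]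

theorem hasFDerivAt_fderiv_taylorPrimitive_apply (hη : ContDiff ℝ 2 η)
    (hf₀ : ∀ t, HasDerivAt f₀ (η (t • u) u) t) (hu : ℓ u = 1) (t : ℝ) (v : E) :
    HasFDerivAt (fun q => fderiv ℝ (taylorPrimitive ℓ u η f₀) q v)
      ((fderiv ℝ η (t • u)).flip v ∘L π + fderiv ℝ η (t • u) (π v) ∘L σ
        + (1 / 2 : ℝ) • (fderiv ℝ η (t • u) (σ v) ∘L σ + (fderiv ℝ η (t • u)).flip (σ v) ∘L σ))
      (t • u) := by
  set x := t • u
  have hπx : π x = x := lineProj_smul_self hu t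
  have hσx : σ x = 0 := transverseProj_smul_self hu t
  have hηπ := (hη.differentiable two_ne_zero (π x)).hasFDerivAt.comp x (π).hasFDerivAt
  have hDηπ := HasFDerivAt.comp (g := fderiv ℝ η) x (hη.hasFDerivAt_fderiv (π x))
    (π).hasFDerivAt
  have hD2η : Tendsto (fun q => fderiv ℝ (fderiv ℝ η) (π q) (π v) (σ q)) (𝓝 x) (𝓝 0) := by
    simpa [hσx] using (((hη.fderiv_right (m := 1) le_rfl).continuous_fderiv_apply one_ne_zero
      |>.comp ((π).continuous.prodMk continuous_const)).clm_apply (σ).continuous).tendsto x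
  have h₀ := hηπ.clm_apply (hasFDerivAt_const v x)
  have h₁ := (hDηπ.clm_apply (hasFDerivAt_const (π v) x)).clm_apply_of_eq_zero
    (σ).hasFDerivAt hσx
  have h₂ := (hDηπ.clm_apply (hasFDerivAt_const (σ v) x)).clm_apply_of_eq_zero
    (σ).hasFDerivAt hσx
  have h₃ := (hDηπ.clm_apply_of_eq_zero (σ).hasFDerivAt hσx).clm_apply
    (hasFDerivAt_const (σ v) x)
  have h₄ := HasFDerivAt.clm_apply_of_tendsto_zero hD2η (σ).hasFDerivAt hσx
  simp_rw [fderiv_taylorPrimitive_apply hη hf₀]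
  refine (((h₀.add h₁).add ((h₂.add h₃).const_mul (1 / 2))).add
    (h₄.const_mul (1 / 2))).congr_fderiv ?_
  ext w
  simp [hπx, hσx]

theorem hasFDerivAt_sub_fderiv_taylorPrimitive_apply (hη : ContDiff ℝ 2 η)
    (hf₀ : ∀ t, HasDerivAt f₀ (η (t • u) u) t) (hu : ℓ u = 1) {t : ℝ}
    (hsymm : ∀ v w, fderiv ℝ η (t • u) v w = fderiv ℝ η (t • u) w v) (v : E) :
    HasFDerivAt (fun q => η q v - fderiv ℝ (taylorPrimitive ℓ u η f₀) q v)
      (0 : E →L[ℝ] ℝ) (t • u) := by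
  refine (((hη.differentiable two_ne_zero (t • u)).hasFDerivAt.clm_apply
    (hasFDerivAt_const v _)).sub
    (hasFDerivAt_fderiv_taylorPrimitive_apply hη hf₀ hu t v)).congr_fderiv ?_
  ext w
  have hsplit : fderiv ℝ η (t • u) w v = fderiv ℝ η (t • u) (π w) v
      + fderiv ℝ η (t • u) (σ w) (π v) + fderiv ℝ η (t • u) (σ w) (σ v) := by
    rw [add_assoc, ← map_add, lineProj_add_transverseProj, ← _root_.add_apply,
      ← map_add, lineProj_add_transverseProj]
  simp only [ContinuousLinearMap.comp_zero, zero_add, smul_add, sub_apply, add_apply,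
    ContinuousLinearMap.flip_apply, ContinuousLinearMap.comp_apply, smul_apply, smul_eq_mul,
    zero_apply, hsplit, hsymm (π v), hsymm (σ v)]
  ring

end

theorem ContinuousLinearMap.apply_comm_of_single {ι F : Type*} [Fintype ι] [DecidableEq ι]
    [NormedAddCommGroup F] [NormedSpace ℝ F] (B : (ι → ℝ) →L[ℝ] (ι → ℝ) →L[ℝ] F)
    (h : ∀ i j, B (Pi.single i 1) (Pi.single j 1) = B (Pi.single j 1) (Pi.single i 1))
    (v w : ι → ℝ) : B v w = B w v := by
  have hflip : B.flip = B := coe_injective <| (Pi.basisFun ℝ ι).ext fun i =>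
    coe_injective <| (Pi.basisFun ℝ ι).ext fun j => by simpa using h j i
  exact congrArg (fun B' => B' w v) hflip

theorem line_eq_smul (θ : ℝ) : line θ = θ • e 0 := by
  ext i; simp [line, e, Pi.single_apply]

theorem sub_line_eq_sum (p : Fin 4 → ℝ) :
    p - line (p 0) = ∑ i : Fin 3, p i.succ • e i.succ := by
  ext k
  refine Fin.cases ?_ (fun m => ?_) k <;> simp [e, line, Pi.single_apply, Fin.succ_ne_zero]

theorem taylorPrimitive_proj_zero_apply {η : (Fin 4 → ℝ) → (Fin 4 → ℝ) →L[ℝ] ℝ}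
    (hη : Differentiable ℝ η) (f₀ : ℝ → ℝ) (p : Fin 4 → ℝ) :
    taylorPrimitive (ContinuousLinearMap.proj 0) (e 0) η f₀ p =
      f₀ (p 0) + (∑ i : Fin 3, η (line (p 0)) (e i.succ) * p i.succ)
        + (1 / 2) * ∑ i : Fin 3, ∑ j : Fin 3,
            fderiv ℝ (fun q => η q (e i.succ)) (line (p 0)) (e j.succ)
              * (p i.succ * p j.succ) := by
  simp only [taylorPrimitive, lineProj_apply, transverseProj_apply, ContinuousLinearMap.proj_apply,
    ← line_eq_smul, sub_line_eq_sum, fderiv_clm_apply_const_apply (hη _), map_sum, map_smul,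
    FunLike.coe_sum, Finset.sum_apply, FunLike.coe_smul, Pi.smul_apply, smul_eq_mul, Finset.mul_sum]
  simp only [mul_comm, mul_left_comm, mul_assoc]

/-- If η is a C² covector field on ℝ⁴ whose exterior derivative vanishes along the
line C = {x₁=x₂=x₃=0}, f₀ is a primitive of θ ↦ η₀(θ,0), and
f(θ,x) = f₀(θ) + Σᵢ ηᵢ(θ,0)xᵢ + ½ Σᵢⱼ ∂ηᵢ/∂xⱼ(θ,0)xᵢxⱼ, then η − df vanishes to first
order along C: it is zero at every point of C, and all its partial derivatives in the
directions x₁,x₂,x₃ of all its components vanish along C. -/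
theorem eta_sub_df_vanishes_to_first_order
    (η : (Fin 4 → ℝ) → ((Fin 4 → ℝ) →L[ℝ] ℝ))
    (hη : ContDiff ℝ 2 η)
    (hclosedC : ∀ (θ : ℝ) (j k : Fin 4),
      fderiv ℝ (fun q => η q (e j)) (line θ) (e k)
        = fderiv ℝ (fun q => η q (e k)) (line θ) (e j))
    (f₀ : ℝ → ℝ)
    (hf₀ : ∀ θ : ℝ, HasDerivAt f₀ (η (line θ) (e 0)) θ)
    (f : (Fin 4 → ℝ) → ℝ)
    (hf : ∀ p : Fin 4 → ℝ,
      f p = f₀ (p 0)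
        + (∑ i : Fin 3, η (line (p 0)) (e i.succ) * p i.succ)
        + (1 / 2) * ∑ i : Fin 3, ∑ j : Fin 3,
            fderiv ℝ (fun q => η q (e i.succ)) (line (p 0)) (e j.succ)
              * (p i.succ * p j.succ)) :
    ∀ θ : ℝ,
      η (line θ) = fderiv ℝ f (line θ) ∧
      ∀ (j : Fin 4) (k : Fin 3),
        fderiv ℝ (fun q => η q (e j) - fderiv ℝ f q (e j)) (line θ) (e k.succ) = 0 := by
  have hηd : Differentiable ℝ η := hη.differentiable (by norm_num)
  have hu : (ContinuousLinearMap.proj 0 : (Fin 4 → ℝ) →L[ℝ] ℝ) (e 0) = 1 := by simp [e]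
  have hf₀' : ∀ t : ℝ, HasDerivAt f₀ (η (t • e 0) (e 0)) t := by
    simpa only [line_eq_smul] using hf₀
  have hsymm : ∀ (θ : ℝ) (v w : Fin 4 → ℝ),
      fderiv ℝ η (θ • e 0) v w = fderiv ℝ η (θ • e 0) w v := fun θ => by
    refine ContinuousLinearMap.apply_comm_of_single _ fun i j => ?_
    simpa only [e, line_eq_smul, fderiv_clm_apply_const_apply (hηd _)] using hclosedC θ j i
  obtain rfl : f = taylorPrimitive (ContinuousLinearMap.proj 0) (e 0) η f₀ :=
    funext fun p => (hf p).trans (taylorPrimitive_proj_zero_apply hηd f₀ p).symm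
  intro θ
  rw [line_eq_smul]
  refine ⟨(fderiv_taylorPrimitive_smul hη hf₀' hu θ).symm, fun j k => ?_⟩
  rw [(hasFDerivAt_sub_fderiv_taylorPrimitive_apply hη hf₀' hu (hsymm θ) (e j)).fderiv]
  rfl
end
end
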